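/- If ℬ₁, ℬ₂ are principal asymptotic gauges on 𝕀ˢ with ℝ_M(ℬ₁) ⊊ ℝ_M(ℬ₂), then there exists a family (𝒜_i)_{i∈ℤ} of principal asymptotic gauges on 𝕀ˢ such that ℝ_M(𝒜_i) ⊊ ℝ_M(𝒜_{i+1}) for all i∈ℤ, and ℝ_M(ℬ₁) ⊊ ℝ_M(𝒜_i) ⊊ ℝ_M(ℬ₂) for all i∈ℤ. -/

import Mathlib

def I01 : Type := {x : ℝ // 0 < x ∧ x ≤ 1}

/-- `P` holds for `ε` sufficiently small, i.e. eventually as `ε → 0⁺`. -/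
def EvS (P : I01 → Prop) : Prop :=
  ∃ ε₀ : I01, ∀ ε : I01, ε.1 ≤ ε₀.1 → P ε

/-- `x_ε = O(y_ε)` as `ε → 0⁺` (the big-O of the special set of indices). -/
def BigOs (x y : I01 → ℝ) : Prop :=
  ∃ H : ℝ, 0 < H ∧ EvS fun ε => |x ε| ≤ H * |y ε|

/-- The moderate nets `ℝ_M(ℬ)` on the special set of indices. -/
def RMs (B : Set (I01 → ℝ)) : Set (I01 → ℝ) :=
  {x | ∃ b ∈ B, BigOs x b}

/-- `AG(b) = {b^m ∣ m ∈ ℕ}`. -/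
def AGgen (b : I01 → ℝ) : Set (I01 → ℝ) :=
  {g | ∃ m : ℕ, g = fun ε => (b ε) ^ m}

/-- `lim_{ε→0⁺} i_ε = +∞`. -/
def LimTopS (i : I01 → ℝ) : Prop :=
  ∀ M : ℝ, EvS fun ε => M < i ε

/-- `ℬ` is an asymptotic gauge on the special set of indices. -/
def IsAGs (B : Set (I01 → ℝ)) : Prop :=
  (∃ i ∈ B, LimTopS i) ∧
  (∀ i ∈ B, ∀ j ∈ B, ∃ p ∈ B, BigOs (fun ε => i ε * j ε) p) ∧
  (∀ i ∈ B, ∀ r : ℝ, ∃ σ ∈ B, BigOs (fun ε => r * i ε) σ) ∧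
  (∀ i ∈ B, ∀ j ∈ B, ∃ s ∈ B, (EvS fun ε => 0 < s ε) ∧
    BigOs (fun ε => |i ε| + |j ε|) s)

/-- A principal AG: one admitting a generator. -/
def Principal (B : Set (I01 → ℝ)) : Prop :=
  IsAGs B ∧ ∃ b ∈ B, RMs (AGgen b) = RMs B

/-- `ℬ ∘ f`. -/
def compS (B : Set (I01 → ℝ)) (f : I01 → I01) : Set (I01 → ℝ) :=
  {g | ∃ b ∈ B, g = b ∘ f}

/-- The filter `ε → 0⁺` on `(0,1]`. -/
def zeroPlus : Filter I01 :=
  Filter.comap (fun ε : I01 => ε.1) (nhdsWithin 0 (Set.Ioi 0))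

/-!
A principal gauge is determined, up to moderate equivalence, by the log-scale
`u = log (|b| + e)` of a generator `b`: its moderate nets are those bounded by
`exp (m u)` for some `m`, and `ℝ_M(AG(exp ∘ u)) ⊆ ℝ_M(AG(exp ∘ u'))` iff `u = O(u')`.
With `u` for `ℬ₁` and `v` for `ℬ₂` (arranged so that `u ≤ v`), strict inclusion means
`u = O(v)` but `v/u` is unbounded. The geometric interpolations `u (v/u)^t`,
`0 ≤ t ≤ 1`, then give strictly increasing moderate classes, since their pairwise
ratios `(v/u)^(s - t)` are unbounded; indexing by `t = sigmoid i` yields the chain.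
-/

open Real

theorem evS_of_forall {P : I01 → Prop} (h : ∀ ε, P ε) : EvS P :=
  ⟨⟨1, one_pos, le_rfl⟩, fun ε _ => h ε⟩

theorem EvS.mono {P Q : I01 → Prop} (h : EvS P) (hPQ : ∀ ε, P ε → Q ε) : EvS Q :=
  let ⟨ε₀, hε₀⟩ := h
  ⟨ε₀, fun ε hε => hPQ ε (hε₀ ε hε)⟩

theorem EvS.and {P Q : I01 → Prop} (hP : EvS P) (hQ : EvS Q) : EvS fun ε => P ε ∧ Q ε := by
  obtain ⟨a, ha⟩ := hP
  obtain ⟨b, hb⟩ := hQ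
  exact ⟨⟨min a.1 b.1, lt_min a.2.1 b.2.1, (min_le_left _ _).trans a.2.2⟩,
    fun ε hε => ⟨ha ε (hε.trans (min_le_left _ _)), hb ε (hε.trans (min_le_right _ _))⟩⟩

theorem EvS.exists {P : I01 → Prop} (h : EvS P) : ∃ ε, P ε :=
  let ⟨ε₀, hε₀⟩ := h
  ⟨ε₀, hε₀ ε₀ le_rfl⟩

theorem LimTopS.mono {f g : I01 → ℝ} (hf : LimTopS f) (hfg : ∀ ε, f ε ≤ g ε) :
    LimTopS g :=
  fun M => (hf M).mono fun ε h => h.trans_le (hfg ε)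

theorem bigOs_of_abs_le {x y : I01 → ℝ} (h : ∀ ε, |x ε| ≤ |y ε|) : BigOs x y :=
  ⟨1, one_pos, evS_of_forall fun ε => by rw [one_mul]; exact h ε⟩

theorem bigOs_of_le {x y : I01 → ℝ} (hx : ∀ ε, 0 ≤ x ε) (h : ∀ ε, x ε ≤ y ε) :
    BigOs x y :=
  bigOs_of_abs_le fun ε => abs_le_abs_of_nonneg (hx ε) (h ε)

theorem BigOs.trans {x y z : I01 → ℝ} (hxy : BigOs x y) (hyz : BigOs y z) : BigOs x z := by
  obtain ⟨H, hH, hev⟩ := hxy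
  obtain ⟨K, hK, hev'⟩ := hyz
  refine ⟨H * K, mul_pos hH hK, (hev.and hev').mono fun ε ⟨h, h'⟩ => ?_⟩
  calc |x ε| ≤ H * |y ε| := h
    _ ≤ H * (K * |z ε|) := mul_le_mul_of_nonneg_left h' hH.le
    _ = H * K * |z ε| := (mul_assoc _ _ _).symm

theorem subset_rms (B : Set (I01 → ℝ)) : B ⊆ RMs B :=
  fun x hx => ⟨x, hx, bigOs_of_abs_le fun _ => le_rfl⟩

theorem rms_subset_rms {B C : Set (I01 → ℝ)} (h : B ⊆ RMs C) : RMs B ⊆ RMs C := by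
  rintro x ⟨b, hb, hxb⟩
  obtain ⟨c, hc, hbc⟩ := h hb
  exact ⟨c, hc, hxb.trans hbc⟩

theorem self_mem_aggen (b : I01 → ℝ) : b ∈ AGgen b :=
  ⟨1, by simp only [pow_one]⟩

theorem rms_aggen_subset {b c : I01 → ℝ}
    (h : ∀ m : ℕ, ∃ n : ℕ, BigOs (fun ε => b ε ^ m) fun ε => c ε ^ n) :
    RMs (AGgen b) ⊆ RMs (AGgen c) := by
  refine rms_subset_rms ?_
  rintro _ ⟨m, rfl⟩
  obtain ⟨n, hmn⟩ := h m
  exact ⟨_, ⟨n, rfl⟩, hmn⟩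

theorem limTopS_abs_of_rms_aggen_eq {B : Set (I01 → ℝ)} {b : I01 → ℝ} (hB : IsAGs B)
    (hb : RMs (AGgen b) = RMs B) : LimTopS fun ε => |b ε| := by
  obtain ⟨i, hiB, hi⟩ := hB.1
  have hiRM : i ∈ RMs (AGgen b) := hb ▸ subset_rms B hiB
  obtain ⟨_, ⟨m, rfl⟩, H, hH, hev⟩ := hiRM
  cases m with
  | zero =>
    obtain ⟨ε, hle, hlt⟩ := (hev.and (hi H)).exists
    simp only [pow_zero, abs_one, mul_one] at hle
    exact absurd (hlt.trans_le ((le_abs_self _).trans hle)) (lt_irrefl _)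
  | succ n =>
    intro M
    refine (hev.and (hi (H * (max M 0 + 1) ^ (n + 1)))).mono fun ε ⟨hle, hlt⟩ => ?_
    by_contra! hbM
    have hpow : |b ε ^ (n + 1)| ≤ (max M 0 + 1) ^ (n + 1) := by
      rw [abs_pow]
      exact pow_le_pow_left₀ (abs_nonneg _) (hbM.trans (by linarith [le_max_left M 0])) _
    linarith [le_abs_self (i ε), mul_le_mul_of_nonneg_left hpow hH.le]

theorem principal_aggen {c : I01 → ℝ} (hc : ∀ ε, 1 ≤ c ε) (hc' : LimTopS c) :
    Principal (AGgen c) := by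
  have hc0 : ∀ ε, 0 < c ε := fun ε => one_pos.trans_le (hc ε)
  refine ⟨⟨⟨c, self_mem_aggen c, hc'⟩, ?_, ?_, ?_⟩, c, self_mem_aggen c, rfl⟩
  · rintro _ ⟨m, rfl⟩ _ ⟨n, rfl⟩
    exact ⟨_, ⟨m + n, rfl⟩, bigOs_of_abs_le fun ε => by rw [pow_add]⟩
  · rintro _ ⟨m, rfl⟩ r
    refine ⟨_, ⟨m, rfl⟩, |r| + 1, by positivity, evS_of_forall fun ε => ?_⟩
    rw [abs_mul]
    exact mul_le_mul_of_nonneg_right (le_add_of_nonneg_right zero_le_one) (abs_nonneg _)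
  · rintro _ ⟨m, rfl⟩ _ ⟨n, rfl⟩
    refine ⟨_, ⟨m + n, rfl⟩, evS_of_forall fun ε => pow_pos (hc0 ε) _, 2, two_pos,
      evS_of_forall fun ε => ?_⟩
    have hpow : ∀ k, |c ε ^ k| = c ε ^ k := fun k => abs_of_pos (pow_pos (hc0 ε) k)
    have hm : c ε ^ m ≤ c ε ^ (m + n) := pow_le_pow_right₀ (hc ε) (Nat.le_add_right _ _)
    have hn : c ε ^ n ≤ c ε ^ (m + n) := pow_le_pow_right₀ (hc ε) (Nat.le_add_left _ _)
    simp only [hpow]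
    rw [abs_of_pos (by linarith [pow_pos (hc0 ε) m, pow_pos (hc0 ε) n])]
    linarith

theorem principal_aggen_exp {w : I01 → ℝ} (hw0 : ∀ ε, 0 ≤ w ε) (hw : LimTopS w) :
    Principal (AGgen (exp ∘ w)) :=
  principal_aggen (fun ε => one_le_exp (hw0 ε))
    (hw.mono fun ε => (le_add_of_nonneg_right zero_le_one).trans (add_one_le_exp (w ε)))

theorem rms_aggen_exp_subset_iff {w w' : I01 → ℝ} (hw : ∀ ε, 0 ≤ w ε)
    (hw' : ∀ ε, 1 ≤ w' ε) :
    RMs (AGgen (exp ∘ w)) ⊆ RMs (AGgen (exp ∘ w')) ↔ BigOs w w' := by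
  have hw'0 : ∀ ε, 0 ≤ w' ε := fun ε => zero_le_one.trans (hw' ε)
  constructor
  · intro h
    obtain ⟨_, ⟨m, rfl⟩, H, hH, hev⟩ := h (subset_rms _ (self_mem_aggen _))
    refine ⟨|log H| + m + 1, by positivity, hev.mono fun ε hε => ?_⟩
    have hlog : w ε ≤ log H + m * w' ε := by
      rw [← exp_le_exp, exp_add, exp_log hH, exp_nat_mul]
      simpa only [Function.comp_apply, abs_exp, abs_pow] using hε
    rw [abs_of_nonneg (hw ε), abs_of_nonneg (hw'0 ε)]
    nlinarith [le_abs_self (log H), abs_nonneg (log H), hw' ε]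
  · rintro ⟨H, hH, hev⟩
    refine rms_aggen_subset fun m => ⟨m * ⌈H⌉₊, 1, one_pos, hev.mono fun ε hε => ?_⟩
    have hle : w ε ≤ ⌈H⌉₊ * w' ε := calc
      w ε ≤ H * w' ε := by simpa only [abs_of_nonneg (hw ε), abs_of_nonneg (hw'0 ε)] using hε
      _ ≤ ⌈H⌉₊ * w' ε := mul_le_mul_of_nonneg_right (Nat.le_ceil H) (hw'0 ε)
    simp only [Function.comp_apply, abs_exp, one_mul, ← exp_nat_mul, exp_le_exp]
    push_cast
    rw [mul_assoc]
    exact mul_le_mul_of_nonneg_left hle (Nat.cast_nonneg m)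

noncomputable def logScale (b : I01 → ℝ) : I01 → ℝ :=
  fun ε => log (|b ε| + exp 1)

theorem exp_logScale (b : I01 → ℝ) (ε : I01) : exp (logScale b ε) = |b ε| + exp 1 :=
  exp_log (by positivity)

theorem one_le_logScale (b : I01 → ℝ) (ε : I01) : 1 ≤ logScale b ε := by
  rw [← exp_le_exp, exp_logScale]
  linarith [abs_nonneg (b ε)]

theorem limTopS_logScale {b : I01 → ℝ} (hb : LimTopS fun ε => |b ε|) : LimTopS (logScale b) :=
  fun M => (hb (exp M)).mono fun ε h => by
    rw [← exp_lt_exp, exp_logScale]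
    linarith [exp_pos 1]

theorem rms_aggen_exp_logScale {b : I01 → ℝ} (hb : LimTopS fun ε => |b ε|) :
    RMs (AGgen (exp ∘ logScale b)) = RMs (AGgen b) := by
  have hexp : ∀ (m : ℕ) ε, |(exp ∘ logScale b) ε ^ m| = (|b ε| + exp 1) ^ m :=
    fun m ε => by
    rw [Function.comp_apply, exp_logScale, abs_of_pos (by positivity)]
  refine subset_antisymm
    (rms_aggen_subset fun m => ⟨m, 2 ^ m, by positivity, (hb (exp 1)).mono fun ε h => ?_⟩)
    (rms_aggen_subset fun m => ⟨m, bigOs_of_abs_le fun ε => ?_⟩)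
  · rw [hexp, abs_pow, ← mul_pow]
    exact pow_le_pow_left₀ (by positivity) (by linarith) m
  · rw [hexp, abs_pow]
    exact pow_le_pow_left₀ (abs_nonneg _) (le_add_of_nonneg_right (exp_pos 1).le) m

theorem rms_aggen_exp_add {u w : I01 → ℝ} (hu : ∀ ε, 0 ≤ u ε) (hw : ∀ ε, 1 ≤ w ε)
    (huw : BigOs u w) : RMs (AGgen (exp ∘ (u + w))) = RMs (AGgen (exp ∘ w)) := by
  have hw0 : ∀ ε, 0 ≤ w ε := fun ε => zero_le_one.trans (hw ε)
  have hle : ∀ ε, w ε ≤ (u + w) ε := fun ε => le_add_of_nonneg_left (hu ε)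
  refine subset_antisymm
    ((rms_aggen_exp_subset_iff (fun ε => add_nonneg (hu ε) (hw0 ε)) hw).2 ?_)
    ((rms_aggen_exp_subset_iff hw0 fun ε => (hw ε).trans (hle ε)).2 (bigOs_of_le hw0 hle))
  obtain ⟨H, hH, hev⟩ := huw
  refine ⟨H + 1, by positivity, hev.mono fun ε h => ?_⟩
  rw [abs_of_nonneg (hu ε), abs_of_nonneg (hw0 ε)] at h
  simp only [abs_of_nonneg (add_nonneg (hu ε) (hw0 ε)), abs_of_nonneg (hw0 ε)]
  linarith

section GeomInterp

variable {u v : I01 → ℝ}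

noncomputable def geomInterp (u v : I01 → ℝ) (t : ℝ) : I01 → ℝ :=
  fun ε => u ε * (v ε / u ε) ^ t

theorem geomInterp_zero : geomInterp u v 0 = u := by
  funext ε
  simp [geomInterp]

theorem geomInterp_one (hu : ∀ ε, u ε ≠ 0) : geomInterp u v 1 = v := by
  funext ε
  simp [geomInterp, mul_div_cancel₀ _ (hu ε)]

theorem geomInterp_pos (hu : ∀ ε, 0 < u ε) (huv : ∀ ε, u ε ≤ v ε) (t : ℝ) (ε : I01) :
    0 < geomInterp u v t ε :=
  mul_pos (hu ε) (rpow_pos_of_pos (div_pos ((hu ε).trans_le (huv ε)) (hu ε)) t)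

theorem geomInterp_eq_mul_rpow (hu : ∀ ε, 0 < u ε) (huv : ∀ ε, u ε ≤ v ε) (t s : ℝ)
    (ε : I01) : geomInterp u v s ε = geomInterp u v t ε * (v ε / u ε) ^ (s - t) := by
  rw [geomInterp, geomInterp, mul_assoc,
    ← rpow_add (div_pos ((hu ε).trans_le (huv ε)) (hu ε)), add_sub_cancel]

theorem geomInterp_mono (hu : ∀ ε, 0 < u ε) (huv : ∀ ε, u ε ≤ v ε) {t s : ℝ}
    (hts : t ≤ s) (ε : I01) : geomInterp u v t ε ≤ geomInterp u v s ε := by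
  rw [geomInterp_eq_mul_rpow hu huv t s]
  exact le_mul_of_one_le_right (geomInterp_pos hu huv t ε).le
    (one_le_rpow ((one_le_div (hu ε)).2 (huv ε)) (sub_nonneg.2 hts))

theorem le_geomInterp (hu : ∀ ε, 0 < u ε) (huv : ∀ ε, u ε ≤ v ε) {t : ℝ} (ht : 0 ≤ t)
    (ε : I01) : u ε ≤ geomInterp u v t ε := by
  simpa only [geomInterp_zero] using geomInterp_mono hu huv ht ε

-- The ratio of two interpolants is `(v/u)^(s - t)`, which is unbounded along with `v/u`.
theorem not_bigOs_geomInterp (hu : ∀ ε, 0 < u ε) (huv : ∀ ε, u ε ≤ v ε)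
    (hvu : ¬ BigOs v u) {t s : ℝ} (hts : t < s) :
    ¬ BigOs (geomInterp u v s) (geomInterp u v t) := by
  rintro ⟨H, hH, hev⟩
  refine hvu ⟨H ^ (s - t)⁻¹, rpow_pos_of_pos hH _, hev.mono fun ε h => ?_⟩
  have hv : 0 < v ε := (hu ε).trans_le (huv ε)
  have hwt := geomInterp_pos hu huv t ε
  rw [abs_of_pos (geomInterp_pos hu huv s ε), abs_of_pos hwt, geomInterp_eq_mul_rpow hu huv t s,
    mul_comm H] at h
  have hratio : v ε / u ε ≤ H ^ (s - t)⁻¹ :=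
    (le_rpow_inv_iff_of_pos (div_pos hv (hu ε)).le hH.le (sub_pos.2 hts)).2
      (le_of_mul_le_mul_left h hwt)
  rw [div_le_iff₀ (hu ε)] at hratio
  rwa [abs_of_pos hv, abs_of_pos (hu ε)]

theorem rms_aggen_exp_geomInterp_ssubset (hu : ∀ ε, 1 ≤ u ε) (huv : ∀ ε, u ε ≤ v ε)
    (hvu : ¬ BigOs v u) {t s : ℝ} (ht : 0 ≤ t) (hts : t < s) :
    RMs (AGgen (exp ∘ geomInterp u v t)) ⊂ RMs (AGgen (exp ∘ geomInterp u v s)) := by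
  have hu0 : ∀ ε, 0 < u ε := fun ε => one_pos.trans_le (hu ε)
  have hnonneg : ∀ r ε, 0 ≤ geomInterp u v r ε := fun r ε => (geomInterp_pos hu0 huv r ε).le
  have hone : ∀ r, 0 ≤ r → ∀ ε, 1 ≤ geomInterp u v r ε :=
    fun r hr ε => (hu ε).trans (le_geomInterp hu0 huv hr ε)
  rw [ssubset_iff_subset_not_subset,
    rms_aggen_exp_subset_iff (hnonneg t) (hone s (ht.trans hts.le)),
    rms_aggen_exp_subset_iff (hnonneg s) (hone t ht)]
  exact ⟨bigOs_of_le (hnonneg t) (geomInterp_mono hu0 huv hts.le),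
    not_bigOs_geomInterp hu0 huv hvu hts⟩

end GeomInterp

/-- Between the moderate classes of two principal AGs on `𝕀ˢ` there is a
`ℤ`-indexed strictly increasing chain of principal AGs. -/
theorem principal_chain (B₁ B₂ : Set (I01 → ℝ))
    (h1 : Principal B₁) (h2 : Principal B₂)
    (hsub : RMs B₁ ⊂ RMs B₂) :
    ∃ A : ℤ → Set (I01 → ℝ),
      (∀ i : ℤ, Principal (A i)) ∧
      (∀ i : ℤ, RMs (A i) ⊂ RMs (A (i + 1))) ∧
      (∀ i : ℤ, RMs B₁ ⊂ RMs (A i) ∧ RMs (A i) ⊂ RMs B₂) := by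
  obtain ⟨hAG₁, b₁, -, hb₁⟩ := h1
  obtain ⟨hAG₂, b₂, -, hb₂⟩ := h2
  have hlim₁ := limTopS_abs_of_rms_aggen_eq hAG₁ hb₁
  set u := logScale b₁
  set w := logScale b₂
  set v := u + w
  have hu : ∀ ε, 1 ≤ u ε := one_le_logScale b₁
  have hw : ∀ ε, 1 ≤ w ε := one_le_logScale b₂
  have hu0 : ∀ ε, 0 ≤ u ε := fun ε => zero_le_one.trans (hu ε)
  have huv : ∀ ε, u ε ≤ v ε := fun ε => le_add_of_nonneg_right (zero_le_one.trans (hw ε))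
  have hB₁ : RMs B₁ = RMs (AGgen (exp ∘ u)) := by
    rw [← hb₁, rms_aggen_exp_logScale hlim₁]
  have hB₂ : RMs B₂ = RMs (AGgen (exp ∘ w)) := by
    rw [← hb₂, rms_aggen_exp_logScale (limTopS_abs_of_rms_aggen_eq hAG₂ hb₂)]
  have huw : BigOs u w := (rms_aggen_exp_subset_iff hu0 hw).1 (hB₁ ▸ hB₂ ▸ hsub.subset)
  rw [hB₁, hB₂, ← rms_aggen_exp_add hu0 hw huw] at hsub ⊢
  have hvu : ¬ BigOs v u := fun h =>
    hsub.not_subset ((rms_aggen_exp_subset_iff (fun ε => (hu0 ε).trans (huv ε)) hu).2 h)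
  refine ⟨fun i => AGgen (exp ∘ geomInterp u v (sigmoid i)),
    fun i => ?_, fun i => ?_, fun i => ⟨?_, ?_⟩⟩
  · have hle := le_geomInterp (fun ε => one_pos.trans_le (hu ε)) huv (sigmoid_pos i).le
    exact principal_aggen_exp (fun ε => (hu0 ε).trans (hle ε))
      ((limTopS_logScale hlim₁).mono hle)
  · exact rms_aggen_exp_geomInterp_ssubset hu huv hvu (sigmoid_pos i).le
      (sigmoid_strictMono (by push_cast; linarith))
  · simpa only [geomInterp_zero] using
      rms_aggen_exp_geomInterp_ssubset hu huv hvu le_rfl (sigmoid_pos i)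
  · simpa only [geomInterp_one fun ε => (one_pos.trans_le (hu ε)).ne'] using
      rms_aggen_exp_geomInterp_ssubset hu huv hvu (sigmoid_pos i).le (sigmoid_lt_one i)
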